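/- Let A be a bounded self-adjoint operator on a Hilbert space H and B a bounded self-adjoint operator on a Hilbert space K. Then the spectrum of A ⊗ id_K + id_H ⊗ B equals {x + y : x ∈ σ(A), y ∈ σ(B)}. -/

import Mathlib

/-!
The map `tmul` induces an isometry `L : H ⊗ K → HK` with dense range, so `A ⊗ 1` and `1 ⊗ B`
extend to commuting self-adjoint operators `a` and `b` on `HK` with `C = a + b`. Extending along
`L` and tensoring with an identity are unital algebra homomorphisms, hence `σ(a) ⊆ σ(A)` and
`σ(b) ⊆ σ(B)`, while Gelfand theory in the commutative C⋆-algebra generated by `a` and `b` gives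
`σ(a + b) ⊆ σ(a) + σ(b)`. Conversely every point of the spectrum of a self-adjoint operator is an
approximate eigenvalue, and if `u`, `v` are approximate eigenvectors of `A`, `B` for `x`, `y`, then
`u ⊗ v` is one of `C` for `x + y`.
-/

open scoped InnerProductSpace TensorProduct NNReal Pointwise

namespace ContinuousLinearMap

variable {𝕜 E : Type*} [NontriviallyNormedField 𝕜] [NormedAddCommGroup E] [NormedSpace 𝕜 E]

def IsApproxEigenvalue (T : E →L[𝕜] E) (x : 𝕜) : Prop :=
  ∀ ε > 0, ∃ u, ‖T u - x • u‖ < ε * ‖u‖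

theorem norm_algebraMap_sub_apply (T : E →L[𝕜] E) (x : 𝕜) (u : E) :
    ‖(algebraMap 𝕜 (E →L[𝕜] E) x - T) u‖ = ‖T u - x • u‖ := by
  simp [norm_sub_rev]

theorem IsApproxEigenvalue.mem_spectrum {T : E →L[𝕜] E} {x : 𝕜} (hx : T.IsApproxEigenvalue x) :
    x ∈ spectrum 𝕜 T := by
  intro hunit
  set V := (↑hunit.unit⁻¹ : E →L[𝕜] E)
  obtain ⟨u, hu⟩ := hx (‖V‖ + 1)⁻¹ (by positivity)
  have hinv : V ((algebraMap 𝕜 (E →L[𝕜] E) x - T) u) = u := by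
    rw [← mul_apply_eq_comp, hunit.val_inv_mul, one_apply_eq_self]
  have hle : ‖u‖ ≤ ‖V‖ * ‖T u - x • u‖ := by
    conv_lhs => rw [← hinv]
    exact norm_algebraMap_sub_apply T x u ▸ V.le_opNorm _
  rw [lt_inv_mul_iff₀ (by positivity)] at hu
  linarith [norm_nonneg (T u - x • u)]

end ContinuousLinearMap

namespace IsSelfAdjoint

theorem isUnit_of_antilipschitz {𝕜 E : Type*} [RCLike 𝕜] [NormedAddCommGroup E]
    [InnerProductSpace 𝕜 E] [CompleteSpace E] {T : E →L[𝕜] E} (hT : IsSelfAdjoint T) {c : ℝ≥0}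
    (hc : AntilipschitzWith c T) : IsUnit T := by
  rw [ContinuousLinearMap.isUnit_iff_bijective,
    ContinuousLinearMap.bijective_iff_dense_range_and_antilipschitz]
  refine ⟨?_, c, hc⟩
  rw [Submodule.topologicalClosure_eq_top_iff, Submodule.eq_bot_iff]
  intro v hv
  have hTv : T v = 0 := by
    rw [← inner_self_eq_zero (𝕜 := 𝕜)]
    exact (hT.isSymmetric (T v) v).symm.trans <|
      (Submodule.mem_orthogonal _ v).mp hv _ (LinearMap.mem_range_self _ _)
  exact hc.injective (hTv.trans (map_zero T).symm)

theorem isApproxEigenvalue_of_mem_spectrum {E : Type*} [NormedAddCommGroup E]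
    [InnerProductSpace ℂ E] [CompleteSpace E] {T : E →L[ℂ] E} (hT : IsSelfAdjoint T) {x : ℂ}
    (hx : x ∈ spectrum ℂ T) : T.IsApproxEigenvalue x := by
  by_contra hbelow
  obtain ⟨ε, hε, hbound⟩ : ∃ ε > 0, ∀ u, ε * ‖u‖ ≤ ‖T u - x • u‖ := by
    simpa [ContinuousLinearMap.IsApproxEigenvalue] using hbelow
  have hreal : IsSelfAdjoint x := by
    rw [hT.mem_spectrum_eq_re hx]
    exact Complex.conj_ofReal _
  lift ε to ℝ≥0 using hε.le
  refine hx ((hreal.algebraMap _).sub hT |>.isUnit_of_antilipschitz (c := ε⁻¹) ?_)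
  refine ContinuousLinearMap.antilipschitz_of_bound _ fun u => ?_
  rw [ContinuousLinearMap.norm_algebraMap_sub_apply, NNReal.coe_inv, inv_mul_eq_div,
    le_div_iff₀ hε, mul_comm]
  exact hbound u

end IsSelfAdjoint

open scoped IsMulCommutative in
open StarAlgebra StarSubalgebra in
/-- In the commutative C⋆-algebra `S` generated by `a` and `b`, a point of `σ (a + b)` is
`φ (a + b) = φ a + φ b` for a character `φ` of `S`; spectral permanence moves all three spectra
between `S` and `A`. -/
theorem IsStarNormal.spectrum_add_subset {A : Type*} [CStarAlgebra A] {a b : A}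
    (ha : IsStarNormal a) (hb : IsStarNormal b) (hab : Commute a b) :
    spectrum ℂ (a + b) ⊆ spectrum ℂ a + spectrum ℂ b := by
  let S : StarSubalgebra ℂ A := (adjoin ℂ {a, b}).topologicalClosure
  have hS : IsClosed (S : Set A) := (adjoin ℂ {a, b}).isClosed_topologicalClosure
  have hcomm₁ := ha.commute_star_left hab
  have hcomm₂ := hb.commute_star_right hab
  have : IsMulCommutative (adjoin ℂ {a, b}) :=
    isMulCommutative_adjoin ℂ (by grind) (by grind [commute_star_comm])
  let _ : CommRing S := (adjoin ℂ {a, b}).commRingTopologicalClosure mul_comm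
  let _ : CommCStarAlgebra S := { }
  have haS : a ∈ S := le_topologicalClosure _ (subset_adjoin ℂ _ (by simp))
  have hbS : b ∈ S := le_topologicalClosure _ (subset_adjoin ℂ _ (by simp))
  have hσ (x : S) : spectrum ℂ x = spectrum ℂ (x : A) := StarSubalgebra.spectrum_eq (hS := hS)
  intro z hz
  rw [show a + b = ((⟨a, haS⟩ + ⟨b, hbS⟩ : S) : A) from rfl, ← hσ] at hz
  obtain ⟨φ, rfl⟩ := WeakDual.CharacterSpace.mem_spectrum_iff_exists.mp hz
  exact ⟨φ ⟨a, haS⟩, hσ ⟨a, haS⟩ ▸ AlgHom.apply_mem_spectrum φ _,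
    φ ⟨b, hbS⟩, hσ ⟨b, hbS⟩ ▸ AlgHom.apply_mem_spectrum φ _, (map_add φ _ _).symm⟩

namespace LinearIsometry

section Normed

variable {𝕜 E F : Type*} [NontriviallyNormedField 𝕜] [NormedAddCommGroup E] [NormedSpace 𝕜 E]
  [NormedAddCommGroup F] [NormedSpace 𝕜 F] {L : E →ₗᵢ[𝕜] F}

theorem ext_of_denseRange (hL : DenseRange L) {S S' : F →L[𝕜] F} (h : ∀ x, S (L x) = S' (L x)) :
    S = S' :=
  DFunLike.coe_injective (hL.equalizer S.continuous S'.continuous (funext h))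

variable [CompleteSpace F]

variable (L) in
/-- The continuous extension of `L ∘ T` along `L`; it is `0` unless `L` has dense range. -/
noncomputable def extendEnd (T : E →L[𝕜] E) : F →L[𝕜] F :=
  (L.toContinuousLinearMap ∘L T).extend L.toContinuousLinearMap

theorem extendEnd_apply (hL : DenseRange L) (T : E →L[𝕜] E) (x : E) :
    L.extendEnd T (L x) = L (T x) :=
  ContinuousLinearMap.extend_eq _ hL L.isometry.isUniformInducing x

noncomputable def extendEndAlgHom (hL : DenseRange L) : (E →L[𝕜] E) →ₐ[𝕜] (F →L[𝕜] F) where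
  toFun := L.extendEnd
  map_one' := ext_of_denseRange hL fun x => by simp [extendEnd_apply hL]
  map_mul' S T := ext_of_denseRange hL fun x => by simp [extendEnd_apply hL]
  map_zero' := ext_of_denseRange hL fun x => by simp [extendEnd_apply hL]
  map_add' S T := ext_of_denseRange hL fun x => by simp [extendEnd_apply hL]
  commutes' c := ext_of_denseRange hL fun x => by simp [extendEnd_apply hL]

theorem _root_.ContinuousLinearMap.IsApproxEigenvalue.extendEnd (hL : DenseRange L)
    {T : E →L[𝕜] E} {x : 𝕜} (hx : T.IsApproxEigenvalue x) :
    (L.extendEnd T).IsApproxEigenvalue x := by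
  intro ε hε
  obtain ⟨u, hu⟩ := hx ε hε
  exact ⟨L u, by rwa [extendEnd_apply hL, ← L.map_smul, ← map_sub, L.norm_map, L.norm_map]⟩

end Normed

theorem isSelfAdjoint_extendEnd {𝕜 E F : Type*} [RCLike 𝕜] [NormedAddCommGroup E]
    [InnerProductSpace 𝕜 E] [NormedAddCommGroup F] [InnerProductSpace 𝕜 F] [CompleteSpace F]
    {L : E →ₗᵢ[𝕜] F} (hL : DenseRange L) {T : E →L[𝕜] E} (hT : (T : E →ₗ[𝕜] E).IsSymmetric) :
    IsSelfAdjoint (L.extendEnd T) := by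
  rw [ContinuousLinearMap.isSelfAdjoint_iff_isSymmetric]
  refine hL.induction_on₂ (isClosed_eq (by fun_prop) (by fun_prop)) fun x y => ?_
  simpa [extendEnd_apply hL, L.inner_map_map] using hT x y

end LinearIsometry

section TensorOperators

open TensorProduct

variable {𝕜 E F : Type*} [RCLike 𝕜] [NormedAddCommGroup E] [InnerProductSpace 𝕜 E]
  [NormedAddCommGroup F] [InnerProductSpace 𝕜 F]

theorem LinearMap.IsSymmetric.tensorProductMap {S : E →ₗ[𝕜] E} {T : F →ₗ[𝕜] F}
    (hS : S.IsSymmetric) (hT : T.IsSymmetric) : (map S T).IsSymmetric := by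
  intro x y
  induction x using TensorProduct.induction_on with
  | zero => simp
  | add x x' hx hx' => simp only [map_add, inner_add_left, hx, hx']
  | tmul e u =>
    induction y using TensorProduct.induction_on with
    | zero => simp
    | add y y' hy hy' => simp only [map_add, inner_add_right, hy, hy']
    | tmul e' u' => simp [hS e e', hT u u']

namespace ContinuousLinearMap

variable (F) in
noncomputable def rTensorAlgHom : (E →L[𝕜] E) →ₐ[𝕜] (E ⊗[𝕜] F →L[𝕜] E ⊗[𝕜] F) where
  toFun T := T.rTensor F
  map_one' := rTensor_one F
  map_mul' S T := rTensor_mul F S T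
  map_zero' := rTensor_zero F
  map_add' S T := rTensor_add F S T
  commutes' c := by simp [Algebra.algebraMap_eq_smul_one]

@[simp] theorem rTensorAlgHom_apply (T : E →L[𝕜] E) : rTensorAlgHom F T = T.rTensor F :=
  rfl

variable (E) in
noncomputable def lTensorAlgHom : (F →L[𝕜] F) →ₐ[𝕜] (E ⊗[𝕜] F →L[𝕜] E ⊗[𝕜] F) where
  toFun T := T.lTensor E
  map_one' := lTensor_one E
  map_mul' S T := lTensor_mul E S T
  map_zero' := lTensor_zero E
  map_add' S T := lTensor_add E S T
  commutes' c := by simp [Algebra.algebraMap_eq_smul_one]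

@[simp] theorem lTensorAlgHom_apply (T : F →L[𝕜] F) : lTensorAlgHom E T = T.lTensor E :=
  rfl

theorem commute_rTensor_lTensor (S : E →L[𝕜] E) (T : F →L[𝕜] F) :
    Commute (S.rTensor F) (T.lTensor E) := by
  simp [Commute, SemiconjBy, mul_def]

theorem IsApproxEigenvalue.rTensor_add_lTensor {A : E →L[𝕜] E} {B : F →L[𝕜] F} {x y : 𝕜}
    (hx : A.IsApproxEigenvalue x) (hy : B.IsApproxEigenvalue y) :
    (A.rTensor F + B.lTensor E).IsApproxEigenvalue (x + y) := by
  intro ε hε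
  obtain ⟨u, hu⟩ := hx (ε / 2) (by positivity)
  obtain ⟨v, hv⟩ := hy (ε / 2) (by positivity)
  have hu0 : 0 < ‖u‖ := pos_of_mul_pos_right ((norm_nonneg _).trans_lt hu) (by positivity)
  have hv0 : 0 < ‖v‖ := pos_of_mul_pos_right ((norm_nonneg _).trans_lt hv) (by positivity)
  refine ⟨u ⊗ₜ v, ?_⟩
  have hsplit : (A.rTensor F + B.lTensor E) (u ⊗ₜ v) - (x + y) • u ⊗ₜ[𝕜] v =
      (A u - x • u) ⊗ₜ v + u ⊗ₜ (B v - y • v) := by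
    simp only [add_apply, rTensor_tmul, lTensor_tmul, sub_tmul, tmul_sub, add_smul,
      ← smul_tmul', tmul_smul]
    abel
  calc ‖(A.rTensor F + B.lTensor E) (u ⊗ₜ v) - (x + y) • u ⊗ₜ[𝕜] v‖
      ≤ ‖A u - x • u‖ * ‖v‖ + ‖u‖ * ‖B v - y • v‖ := by
        rw [hsplit, ← norm_tmul (𝕜 := 𝕜), ← norm_tmul (𝕜 := 𝕜)]
        exact norm_add_le _ _
    _ < ε / 2 * ‖u‖ * ‖v‖ + ‖u‖ * (ε / 2 * ‖v‖) := by gcongr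
    _ = ε * ‖u ⊗ₜ[𝕜] v‖ := by rw [norm_tmul]; ring

end ContinuousLinearMap

end TensorOperators

namespace TensorProduct

theorem range_lift {R M N P : Type*} [CommSemiring R] [AddCommMonoid M] [AddCommMonoid N]
    [AddCommMonoid P] [Module R M] [Module R N] [Module R P] (f : M →ₗ[R] N →ₗ[R] P) :
    LinearMap.range (lift f) = Submodule.span R {z | ∃ m n, z = f m n} := by
  rw [LinearMap.range_eq_map, ← span_tmul_eq_top, Submodule.map_span]
  congr 1
  ext z
  simp [eq_comm]

variable {𝕜 E F G : Type*} [RCLike 𝕜] [NormedAddCommGroup E] [InnerProductSpace 𝕜 E]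
  [NormedAddCommGroup F] [InnerProductSpace 𝕜 F] [NormedAddCommGroup G] [InnerProductSpace 𝕜 G]
  {f : E →ₗ[𝕜] F →ₗ[𝕜] G}

theorem inner_lift_lift (hf : ∀ e e' u u', ⟪f e u, f e' u'⟫_𝕜 = ⟪e, e'⟫_𝕜 * ⟪u, u'⟫_𝕜)
    (x y : E ⊗[𝕜] F) : ⟪lift f x, lift f y⟫_𝕜 = ⟪x, y⟫_𝕜 := by
  induction x using TensorProduct.induction_on with
  | zero => simp
  | add x x' hx hx' => simp only [map_add, inner_add_left, hx, hx']
  | tmul e u =>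
    induction y using TensorProduct.induction_on with
    | zero => simp
    | add y y' hy hy' => simp only [map_add, inner_add_right, hy, hy']
    | tmul e' u' => simp [hf]

variable (f) in
noncomputable def liftIsometry (hf : ∀ e e' u u', ⟪f e u, f e' u'⟫_𝕜 = ⟪e, e'⟫_𝕜 * ⟪u, u'⟫_𝕜) :
    E ⊗[𝕜] F →ₗᵢ[𝕜] G :=
  (lift f).isometryOfInner (inner_lift_lift hf)

@[simp] theorem liftIsometry_tmul (hf : ∀ e e' u u', ⟪f e u, f e' u'⟫_𝕜 = ⟪e, e'⟫_𝕜 * ⟪u, u'⟫_𝕜)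
    (e : E) (u : F) : liftIsometry f hf (e ⊗ₜ u) = f e u :=
  lift.tmul e u

theorem denseRange_liftIsometry
    (hf : ∀ e e' u u', ⟪f e u, f e' u'⟫_𝕜 = ⟪e, e'⟫_𝕜 * ⟪u, u'⟫_𝕜)
    (hdense : Dense (Submodule.span 𝕜 {z | ∃ e u, z = f e u} : Set G)) :
    DenseRange (liftIsometry f hf) := by
  rwa [← range_lift, LinearMap.coe_range] at hdense

theorem eq_extendEnd_liftIsometry [CompleteSpace G]
    (hf : ∀ e e' u u', ⟪f e u, f e' u'⟫_𝕜 = ⟪e, e'⟫_𝕜 * ⟪u, u'⟫_𝕜)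
    (hdense : Dense (Submodule.span 𝕜 {z | ∃ e u, z = f e u} : Set G))
    {T : E ⊗[𝕜] F →L[𝕜] E ⊗[𝕜] F} {C : G →L[𝕜] G}
    (hC : ∀ e u, C (f e u) = liftIsometry f hf (T (e ⊗ₜ u))) :
    C = (liftIsometry f hf).extendEnd T := by
  have hL := denseRange_liftIsometry hf hdense
  refine LinearIsometry.ext_of_denseRange hL fun x => ?_
  induction x using TensorProduct.induction_on with
  | zero => simp
  | add x x' hx hx' => simp only [map_add, hx, hx']
  | tmul e u => rw [LinearIsometry.extendEnd_apply hL, ← hC, liftIsometry_tmul]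

end TensorProduct

theorem spectrum_tensor_sum_general
    {H K HK : Type*}
    [NormedAddCommGroup H] [InnerProductSpace ℂ H] [CompleteSpace H]
    [NormedAddCommGroup K] [InnerProductSpace ℂ K] [CompleteSpace K]
    [NormedAddCommGroup HK] [InnerProductSpace ℂ HK] [CompleteSpace HK]
    (tmul : H →ₗ[ℂ] K →ₗ[ℂ] HK)
    (hinner : ∀ (h h' : H) (k k' : K),
      ⟪tmul h k, tmul h' k'⟫_ℂ = ⟪h, h'⟫_ℂ * ⟪k, k'⟫_ℂ)
    (hdense : Dense (Submodule.span ℂ {z : HK | ∃ h k, z = tmul h k} : Set HK))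
    (A : H →L[ℂ] H) (hA : IsSelfAdjoint A)
    (B : K →L[ℂ] K) (hB : IsSelfAdjoint B)
    (C : HK →L[ℂ] HK)
    (hC : ∀ (h : H) (k : K), C (tmul h k) = tmul (A h) k + tmul h (B k)) :
    spectrum ℂ C =
      {z : ℂ | ∃ x ∈ spectrum ℂ A, ∃ y ∈ spectrum ℂ B, z = x + y} := by
  set L := TensorProduct.liftIsometry tmul hinner
  have hL : DenseRange L := TensorProduct.denseRange_liftIsometry hinner hdense
  set Φ := LinearIsometry.extendEndAlgHom hL
  set a := Φ (A.rTensorAlgHom K)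
  set b := Φ (B.lTensorAlgHom H)
  have hCab : C = Φ (A.rTensorAlgHom K + B.lTensorAlgHom H) :=
    TensorProduct.eq_extendEnd_liftIsometry hinner hdense fun h k => by simp [hC]
  have ha : IsSelfAdjoint a := LinearIsometry.isSelfAdjoint_extendEnd hL
    (hA.isSymmetric.tensorProductMap LinearMap.IsSymmetric.id)
  have hb : IsSelfAdjoint b := LinearIsometry.isSelfAdjoint_extendEnd hL <| by
    rw [ContinuousLinearMap.lTensorAlgHom_apply, ContinuousLinearMap.toLinearMap_lTensor]
    exact LinearMap.IsSymmetric.id.tensorProductMap hB.isSymmetric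
  have hsum : {z : ℂ | ∃ x ∈ spectrum ℂ A, ∃ y ∈ spectrum ℂ B, z = x + y} =
      spectrum ℂ A + spectrum ℂ B := by
    ext z
    simp [Set.mem_add, eq_comm]
  rw [hsum, hCab, map_add]
  refine subset_antisymm ?_ ?_
  · calc spectrum ℂ (a + b) ⊆ spectrum ℂ a + spectrum ℂ b :=
          ha.isStarNormal.spectrum_add_subset hb.isStarNormal
            ((A.commute_rTensor_lTensor B).map Φ)
      _ ⊆ spectrum ℂ A + spectrum ℂ B := Set.add_subset_add
          ((AlgHom.spectrum_apply_subset Φ _).trans (AlgHom.spectrum_apply_subset _ A))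
          ((AlgHom.spectrum_apply_subset Φ _).trans (AlgHom.spectrum_apply_subset _ B))
  · rintro _ ⟨x, hx, y, hy, rfl⟩
    rw [← map_add]
    exact ((hA.isApproxEigenvalue_of_mem_spectrum hx).rTensor_add_lTensor
      (hB.isApproxEigenvalue_of_mem_spectrum hy) |>.extendEnd hL).mem_spectrum

/-- The spectrum of `A ⊗ id + id ⊗ B` on the Hilbert tensor product `H ⊗ K`
(presented as a Hilbert space `HK` with an elementary-tensor map `tmul` having
dense span and the product inner product) is the sum set of the spectra. -/
theorem spectrum_tensor_sum
    {H K HK : Type*}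
    [NormedAddCommGroup H] [InnerProductSpace ℂ H] [CompleteSpace H] [Nontrivial H]
    [NormedAddCommGroup K] [InnerProductSpace ℂ K] [CompleteSpace K] [Nontrivial K]
    [NormedAddCommGroup HK] [InnerProductSpace ℂ HK] [CompleteSpace HK]
    (tmul : H →ₗ[ℂ] K →ₗ[ℂ] HK)
    (hinner : ∀ (h h' : H) (k k' : K),
      ⟪tmul h k, tmul h' k'⟫_ℂ = ⟪h, h'⟫_ℂ * ⟪k, k'⟫_ℂ)
    (hdense : Dense (Submodule.span ℂ {z : HK | ∃ h k, z = tmul h k} : Set HK))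
    (A : H →L[ℂ] H) (hA : IsSelfAdjoint A)
    (B : K →L[ℂ] K) (hB : IsSelfAdjoint B)
    (C : HK →L[ℂ] HK)
    (hC : ∀ (h : H) (k : K), C (tmul h k) = tmul (A h) k + tmul h (B k)) :
    spectrum ℂ C =
      {z : ℂ | ∃ x ∈ spectrum ℂ A, ∃ y ∈ spectrum ℂ B, z = x + y} :=
  spectrum_tensor_sum_general tmul hinner hdense A hA B hB C hC
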